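/- Let K_1, K_2 be fractal k-cubes of order n with digit sets D_1, D_2 and let α ∈ A_k. Then F_α = K_1 ∩ (K_2 + α) is empty if and only if for every p ≥ 0 and every chain α = α_0 ⊑ α_1 ⊑ … ⊑ α_p in A_k, the product #G_{α_0α_1} · #G_{α_1α_2} · … · #G_{α_{p−1}α_p} · #G_{α_p α_p} equals zero (where #S denotes the cardinality of a finite set S). -/

import Mathlib

open Set Pointwise MeasureTheory

noncomputable section

/-- Points of `ℝ^k`. -/
abbrev Pt (k : ℕ) := Fin k → ℝ

/-- A vector with all coordinates in `{0, 1, …, n−1}`. -/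
def IsDigit (n : ℕ) {k : ℕ} (d : Pt k) : Prop :=
  ∀ i, ∃ m : ℕ, m < n ∧ d i = (m : ℝ)

/-- A digit set: a nonempty subset of `{0, 1, …, n−1}^k`. -/
def IsDigitSet (n : ℕ) {k : ℕ} (D : Set (Pt k)) : Prop :=
  D.Nonempty ∧ ∀ d ∈ D, IsDigit n d

/-- `K` is the fractal `k`-cube of order `n` with digit set `D`:
a nonempty compact set with `nK = K + D`. -/
def IsFractalCube (n : ℕ) {k : ℕ} (D K : Set (Pt k)) : Prop :=
  K.Nonempty ∧ IsCompact K ∧ (n : ℝ) • K = K + D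

/-- `α ∈ A_k = {−1, 0, 1}^k`. -/
def IsAk {k : ℕ} (α : Pt k) : Prop :=
  ∀ i, α i = -1 ∨ α i = 0 ∨ α i = 1

/-- The unit cube `P = [0,1]^k`. -/
def unitCube (k : ℕ) : Set (Pt k) := {x | ∀ i, 0 ≤ x i ∧ x i ≤ 1}

/-- The face `P_α = P ∩ (P + α)`. -/
def face {k : ℕ} (α : Pt k) : Set (Pt k) :=
  unitCube k ∩ ((fun x => x + α) '' unitCube k)

/-- `α ⊑ β` : `β i = α i` whenever `α i ≠ 0`. -/
def SqLe {k : ℕ} (α β : Pt k) : Prop := ∀ i, α i ≠ 0 → β i = α i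

/-- `α ⊏ β`. -/
def SqLt {k : ℕ} (α β : Pt k) : Prop := SqLe α β ∧ α ≠ β

/-- `F_α = K₁ ∩ (K₂ + α)`. -/
def interF {k : ℕ} (K1 K2 : Set (Pt k)) (α : Pt k) : Set (Pt k) :=
  K1 ∩ ((fun x => x + α) '' K2)

/-- `G_{αβ} = D₁ ∩ (D₂ + nα − β)`. -/
def Gab (n : ℕ) {k : ℕ} (D1 D2 : Set (Pt k)) (α β : Pt k) : Set (Pt k) :=
  D1 ∩ ((fun x => x + ((n : ℝ) • α - β)) '' D2)

/-- `G_α = G_{αα} = D₁ ∩ (D₂ + (n−1)α)`. -/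
def Ga (n : ℕ) {k : ℕ} (D1 D2 : Set (Pt k)) (α : Pt k) : Set (Pt k) :=
  Gab n D1 D2 α α

/-- `β ≻ α` : there is a chain `α = α₀ ⊏ α₁ ⊏ … ⊏ α_p = β` in `A_k` (`p ≥ 1`)
with all `F_{α_j}` nonempty and all `G_{α_{j−1} α_j}` nonempty. -/
def GSucc (n : ℕ) {k : ℕ} (D1 D2 K1 K2 : Set (Pt k)) (β α : Pt k) : Prop :=
  ∃ p : ℕ, 0 < p ∧ ∃ c : ℕ → Pt k, c 0 = α ∧ c p = β ∧
    (∀ j ≤ p, IsAk (c j)) ∧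
    (∀ j < p, SqLt (c j) (c (j + 1))) ∧
    (∀ j ≤ p, (interF K1 K2 (c j)).Nonempty) ∧
    (∀ j < p, (Gab n D1 D2 (c j) (c (j + 1))).Nonempty)

/-- `β ≽ α`. -/
def GSuccEq (n : ℕ) {k : ℕ} (D1 D2 K1 K2 : Set (Pt k)) (β α : Pt k) : Prop :=
  GSucc n D1 D2 K1 K2 β α ∨ β = α

/-- The map `S_d(x) = (x + d)/n`. -/
def Sdig (n : ℕ) {k : ℕ} (d : Pt k) : Pt k → Pt k :=
  fun x => (n : ℝ)⁻¹ • (x + d)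

/-- The `p`-th refinement digit set
`D^(p) = { n^{p−1} d₁ + n^{p−2} d₂ + … + d_p : (d₁, …, d_p) ∈ D^p }`. -/
def refineD (n p : ℕ) {k : ℕ} (D : Set (Pt k)) : Set (Pt k) :=
  {x | ∃ f : Fin p → Pt k, (∀ j, f j ∈ D) ∧
    x = ∑ j : Fin p, ((n : ℝ) ^ (p - 1 - (j : ℕ))) • f j}

/-- A maximal vertex of the structure graph: `F_β ≠ ∅` and no `γ ≻ β`. -/
def IsMaxVertex (n : ℕ) {k : ℕ} (D1 D2 K1 K2 : Set (Pt k)) (β : Pt k) : Prop :=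
  IsAk β ∧ (interF K1 K2 β).Nonempty ∧ ¬∃ γ, IsAk γ ∧ GSucc n D1 D2 K1 K2 γ β

/-- The product `∏ #G_{α_j α_{j+1}}` over consecutive pairs of a chain. -/
def chainProd (n : ℕ) {k : ℕ} (D1 D2 : Set (Pt k)) : List (Pt k) → ℕ
  | [] => 1
  | [_] => 1
  | a :: b :: rest => (Gab n D1 D2 a b).ncard * chainProd n D1 D2 (b :: rest)

/-- A chain `α = α₁ ⊏ α₂ ⊏ … ⊏ α_p = β` inside `Γ_α` ending at a maximal vertex `β`. -/
def IsMaxChainFrom (n : ℕ) {k : ℕ} (D1 D2 K1 K2 : Set (Pt k)) (α : Pt k)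
    (c : List (Pt k)) : Prop :=
  c ≠ [] ∧ c.head? = some α ∧ List.Chain' SqLt c ∧
  (∀ β ∈ c, IsAk β ∧ GSuccEq n D1 D2 K1 K2 β α) ∧
  ∃ β, c.getLast? = some β ∧ IsMaxVertex n D1 D2 K1 K2 β

/-!
If `G_{α₀α₁}, …, G_{α_{p−1}α_p}, G_{α_p}` are all nonempty then `F_α ≠ ∅`: a digit pair in
`G_{α_p}` gives the fixed points of `S_{d₁}` and `S_{d₂}`, which lie in `F_{α_p}`, and a digit pair
`(d₁, d₂)` in `G_{ab}` maps `F_b` into `F_a` by `x ↦ S_{d₁} x`. Conversely, if `x = y + α` with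
`x ∈ K₁`, `y ∈ K₂`, write `n x = x' + d₁`, `n y = y' + d₂` by self-similarity; then
`β = x' − y' = d₂ + nα − d₁` is an integer vector in `[−1, 1]^k` which agrees with `α` wherever
`α ≠ 0` (the digits lie in `[0, n−1]`), so `(d₁, d₂)` witnesses `G_{αβ} ≠ ∅` and `x' ∈ F_β`.
Iterating, the chain must stop at some `β = α`, i.e. at a nonempty `G_α`, because each strict
step `α ⊏ β` loses a zero coordinate.
-/

section FractalCube

variable {k n : ℕ} {D D1 D2 K K1 K2 : Set (Pt k)}

lemma IsDigitSet.finite (hD : IsDigitSet n D) : D.Finite := by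
  refine (Set.Finite.pi fun _ => (Set.finite_Iio n).image ((↑) : ℕ → ℝ)).subset ?_
  intro d hd i _
  obtain ⟨m, hm, hdm⟩ := hD.2 d hd i
  exact ⟨m, hm, hdm.symm⟩

lemma Gab_finite (hD1 : IsDigitSet n D1) (α β : Pt k) : (Gab n D1 D2 α β).Finite :=
  hD1.finite.subset inter_subset_left

lemma prod_ncard_Gab_ne_zero_iff (hD1 : IsDigitSet n D1) {p : ℕ} {c : ℕ → Pt k} :
    (∏ j ∈ Finset.range p, (Gab n D1 D2 (c j) (c (j + 1))).ncard) *
        (Gab n D1 D2 (c p) (c p)).ncard ≠ 0 ↔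
      (∀ j < p, (Gab n D1 D2 (c j) (c (j + 1))).Nonempty) ∧ (Ga n D1 D2 (c p)).Nonempty := by
  simp only [Ne, mul_eq_zero, not_or, Finset.prod_eq_zero_iff, Finset.mem_range, not_exists,
    not_and, Set.ncard_eq_zero (Gab_finite hD1 _ _), ← Set.not_nonempty_iff_eq_empty, not_not, Ga]

lemma IsFractalCube.exists_smul_eq_add (hK : IsFractalCube n D K) {x : Pt k} (hx : x ∈ K) :
    ∃ y ∈ K, ∃ d ∈ D, (n : ℝ) • x = y + d := by
  have : (n : ℝ) • x ∈ K + D := hK.2.2 ▸ smul_mem_smul_set hx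
  obtain ⟨y, hy, d, hd, h⟩ := this
  exact ⟨y, hy, d, hd, h.symm⟩

lemma IsFractalCube.exists_smul_eq (hK : IsFractalCube n D K) {y d : Pt k} (hy : y ∈ K)
    (hd : d ∈ D) : ∃ x ∈ K, (n : ℝ) • x = y + d := by
  have : y + d ∈ (n : ℝ) • K := hK.2.2 ▸ add_mem_add hy hd
  exact mem_smul_set.1 this

lemma IsFractalCube.subset_unitCube (hn : 2 ≤ n) (hD : IsDigitSet n D)
    (hK : IsFractalCube n D K) : K ⊆ unitCube k := by
  have hn' : (2 : ℝ) ≤ n := by exact_mod_cast hn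
  have hdigit : ∀ d ∈ D, ∀ i, 0 ≤ d i ∧ d i ≤ (n : ℝ) - 1 := by
    intro d hd i
    obtain ⟨m, hm, hdm⟩ := hD.2 d hd i
    have : (m : ℝ) + 1 ≤ n := by exact_mod_cast hm
    exact ⟨hdm ▸ m.cast_nonneg, by linarith⟩
  have hcoord : ∀ z ∈ K, ∀ i, ∃ y ∈ K, ∃ d ∈ D, (n : ℝ) * z i = y i + d i := by
    intro z hz i
    obtain ⟨y, hy, d, hd, h⟩ := hK.exists_smul_eq_add hz
    exact ⟨y, hy, d, hd, by simpa using congrFun h i⟩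
  obtain ⟨hne, hcpt, -⟩ := hK
  intro x hx i
  constructor
  · obtain ⟨z, hz, hmin⟩ := hcpt.exists_isMinOn hne (continuous_apply i).continuousOn
    obtain ⟨y, hy, d, hd, h⟩ := hcoord z hz i
    have hzy : z i ≤ y i := hmin hy
    have hzx : z i ≤ x i := hmin hx
    nlinarith [(hdigit d hd i).1]
  · obtain ⟨z, hz, hmax⟩ := hcpt.exists_isMaxOn hne (continuous_apply i).continuousOn
    obtain ⟨y, hy, d, hd, h⟩ := hcoord z hz i
    have hyz : y i ≤ z i := hmax hy
    have hxz : x i ≤ z i := hmax hx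
    nlinarith [(hdigit d hd i).2]

lemma IsFractalCube.inv_sub_one_smul_mem (hn : 2 ≤ n) (hK : IsFractalCube n D K) {d : Pt k}
    (hd : d ∈ D) : ((n : ℝ) - 1)⁻¹ • d ∈ K := by
  have hn' : (2 : ℝ) ≤ n := by exact_mod_cast hn
  set c : Pt k := ((n : ℝ) - 1)⁻¹ • d
  have hc : (n : ℝ) • c = c + d := by
    have : (n : ℝ) * ((n : ℝ) - 1)⁻¹ = ((n : ℝ) - 1)⁻¹ + 1 := by
      field_simp [show (n : ℝ) - 1 ≠ 0 by linarith]; ring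
    rw [smul_smul, this, add_smul, one_smul]
  obtain ⟨z, hz, hmin⟩ := hK.2.1.exists_isMinOn hK.1
    (f := fun x => dist x c) (continuous_id.dist continuous_const).continuousOn
  obtain ⟨w, hw, hwz⟩ := hK.exists_smul_eq hz hd
  -- `w = S_d z`, and `S_d` contracts distances to its fixed point `c` by the factor `1/n`
  have hdist : dist z c = n * dist w c := by
    have := dist_smul₀ (n : ℝ) w c
    rwa [hwz, hc, dist_add_right, Real.norm_natCast] at this
  have hzw : dist z c ≤ dist w c := hmin hw
  have : dist z c = 0 := by nlinarith [dist_nonneg (x := w) (y := c)]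
  exact dist_eq_zero.1 this ▸ hz

lemma interF_nonempty_of_Ga (hn : 2 ≤ n) (hK1 : IsFractalCube n D1 K1)
    (hK2 : IsFractalCube n D2 K2) {α : Pt k} (h : (Ga n D1 D2 α).Nonempty) :
    (interF K1 K2 α).Nonempty := by
  obtain ⟨d, hd, d', hd', hdd'⟩ := h
  have hn' : (n : ℝ) - 1 ≠ 0 := by
    have : (2 : ℝ) ≤ n := by exact_mod_cast hn
    linarith
  refine ⟨_, hK1.inv_sub_one_smul_mem hn hd, _, hK2.inv_sub_one_smul_mem hn hd', ?_⟩
  rw [← hdd', ← one_smul ℝ α, smul_smul, mul_one, ← sub_smul, smul_add, smul_smul,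
    inv_mul_cancel₀ hn', one_smul]

lemma interF_nonempty_of_Gab (hn : 2 ≤ n) (hK1 : IsFractalCube n D1 K1)
    (hK2 : IsFractalCube n D2 K2) {α β : Pt k} (hG : (Gab n D1 D2 α β).Nonempty)
    (hF : (interF K1 K2 β).Nonempty) : (interF K1 K2 α).Nonempty := by
  obtain ⟨d1, hd1, d2, hd2, hd⟩ := hG
  obtain ⟨y1, hy1, y2, hy2, hy⟩ := hF
  obtain ⟨x1, hx1, h1⟩ := hK1.exists_smul_eq hy1 hd1
  obtain ⟨x2, hx2, h2⟩ := hK2.exists_smul_eq hy2 hd2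
  refine ⟨x1, hx1, x2, hx2, smul_right_injective (Pt k) (by positivity : (n : ℝ) ≠ 0) ?_⟩
  simp only at hd hy ⊢
  rw [h1, smul_add, h2, ← hd, ← hy]
  abel

lemma interF_nonempty_of_chain (hn : 2 ≤ n) (hK1 : IsFractalCube n D1 K1)
    (hK2 : IsFractalCube n D2 K2) {p : ℕ} {c : ℕ → Pt k}
    (hG : ∀ j < p, (Gab n D1 D2 (c j) (c (j + 1))).Nonempty) (hGa : (Ga n D1 D2 (c p)).Nonempty) :
    (interF K1 K2 (c 0)).Nonempty := by
  induction p generalizing c with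
  | zero => exact interF_nonempty_of_Ga hn hK1 hK2 hGa
  | succ p ih =>
    have hF1 : (interF K1 K2 (c 1)).Nonempty :=
      ih (c := fun j => c (j + 1)) (fun j hj => hG (j + 1) (by omega)) hGa
    exact interF_nonempty_of_Gab hn hK1 hK2 (hG 0 p.succ_pos) hF1

lemma coord_step_of_digits {m₁ m₂ : ℕ} (h₁ : m₁ < n) (h₂ : m₂ < n) {a b : ℝ}
    (ha : a = -1 ∨ a = 0 ∨ a = 1) (hb : b = m₂ - m₁ + n * a) (hlo : -1 ≤ b) (hhi : b ≤ 1) :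
    (b = -1 ∨ b = 0 ∨ b = 1) ∧ (a ≠ 0 → b = a) := by
  have h₁' : (m₁ : ℝ) + 1 ≤ n := by exact_mod_cast h₁
  have h₂' : (m₂ : ℝ) + 1 ≤ n := by exact_mod_cast h₂
  rcases ha with rfl | rfl | rfl
  · have : b = -1 := by linarith [m₂.cast_nonneg (α := ℝ)]
    exact ⟨Or.inl this, fun _ => this⟩
  · refine ⟨?_, fun h => absurd rfl h⟩
    have hbz : b = ((m₂ - m₁ : ℤ) : ℝ) := by rw [hb]; push_cast; ring
    rw [hbz] at hlo hhi ⊢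
    have hlo' : (-1 : ℤ) ≤ m₂ - m₁ := by exact_mod_cast hlo
    have hhi' : (m₂ - m₁ : ℤ) ≤ 1 := by exact_mod_cast hhi
    rcases (by omega : (m₂ - m₁ : ℤ) = -1 ∨ (m₂ - m₁ : ℤ) = 0 ∨ (m₂ - m₁ : ℤ) = 1)
      with h | h | h <;> simp [h]
  · have : b = 1 := by linarith [m₁.cast_nonneg (α := ℝ)]
    exact ⟨Or.inr (Or.inr this), fun _ => this⟩

lemma exists_sqLe_Gab_nonempty (hn : 2 ≤ n) (hD1 : IsDigitSet n D1) (hD2 : IsDigitSet n D2)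
    (hK1 : IsFractalCube n D1 K1) (hK2 : IsFractalCube n D2 K2) {α : Pt k} (hα : IsAk α)
    (hF : (interF K1 K2 α).Nonempty) :
    ∃ β, IsAk β ∧ SqLe α β ∧ (Gab n D1 D2 α β).Nonempty ∧ (interF K1 K2 β).Nonempty := by
  obtain ⟨x, hx, y, hy, hxy⟩ := hF
  obtain ⟨x', hx', d1, hd1, h1⟩ := hK1.exists_smul_eq_add hx
  obtain ⟨y', hy', d2, hd2, h2⟩ := hK2.exists_smul_eq_add hy
  have hβ : x' - y' = d2 + (n : ℝ) • α - d1 := by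
    simp only at hxy
    rw [eq_sub_of_add_eq h1.symm, eq_sub_of_add_eq h2.symm, ← hxy, smul_add]
    abel
  have hcoord : ∀ i, ((x' - y') i = -1 ∨ (x' - y') i = 0 ∨ (x' - y') i = 1) ∧
      (α i ≠ 0 → (x' - y') i = α i) := by
    intro i
    obtain ⟨m₁, hm₁, he₁⟩ := hD1.2 d1 hd1 i
    obtain ⟨m₂, hm₂, he₂⟩ := hD2.2 d2 hd2 i
    have hx'i := hK1.subset_unitCube hn hD1 hx' i
    have hy'i := hK2.subset_unitCube hn hD2 hy' i
    refine coord_step_of_digits hm₁ hm₂ (hα i) ?_ ?_ ?_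
    · rw [hβ]; simp [he₁, he₂]; ring
    · simp only [Pi.sub_apply]; linarith
    · simp only [Pi.sub_apply]; linarith
  refine ⟨x' - y', fun i => (hcoord i).1, fun i => (hcoord i).2, ⟨d1, hd1, d2, hd2, ?_⟩,
    ⟨x', hx', y', hy', ?_⟩⟩
  · simp only [hβ]; abel
  · simp only; abel

lemma card_filter_eq_zero_lt_of_sqLe {α β : Pt k} (h : SqLe α β) (hne : β ≠ α) :
    (Finset.univ.filter fun i => β i = 0).card < (Finset.univ.filter fun i => α i = 0).card := by
  apply Finset.card_lt_card
  refine Finset.ssubset_iff_of_subset (fun i => ?_) |>.2 ?_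
  · simp only [Finset.mem_filter, Finset.mem_univ, true_and]
    exact fun hβi => by_contra fun hαi => hαi (h i hαi ▸ hβi)
  · obtain ⟨i, hi⟩ := Function.ne_iff.1 hne
    have hαi : α i = 0 := by_contra fun hαi => hi (h i hαi)
    exact ⟨i, by simp [hαi], by simp [hαi ▸ hi]⟩

lemma exists_chain_of_interF_nonempty (hn : 2 ≤ n) (hD1 : IsDigitSet n D1)
    (hD2 : IsDigitSet n D2) (hK1 : IsFractalCube n D1 K1) (hK2 : IsFractalCube n D2 K2)
    {α : Pt k} (hα : IsAk α) (hF : (interF K1 K2 α).Nonempty) :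
    ∃ (p : ℕ) (c : ℕ → Pt k), c 0 = α ∧ (∀ j ≤ p, IsAk (c j)) ∧
      (∀ j < p, SqLe (c j) (c (j + 1))) ∧
      (∀ j < p, (Gab n D1 D2 (c j) (c (j + 1))).Nonempty) ∧ (Ga n D1 D2 (c p)).Nonempty := by
  obtain ⟨β, hβ, hαβ, hG, hFβ⟩ := exists_sqLe_Gab_nonempty hn hD1 hD2 hK1 hK2 hα hF
  by_cases hβα : β = α
  · subst hβα
    exact ⟨0, fun _ => β, rfl, fun _ _ => hβ, by simp, by simp, hG⟩
  obtain ⟨p, c, hc0, hAk, hle, hGc, hGa⟩ :=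
    exists_chain_of_interF_nonempty hn hD1 hD2 hK1 hK2 hβ hFβ
  subst hc0
  refine ⟨p + 1, fun | 0 => α | j + 1 => c j, rfl, ?_, ?_, ?_, hGa⟩
  · rintro (_ | j) hj
    exacts [hα, hAk j (by omega)]
  · rintro (_ | j) hj
    exacts [hαβ, hle j (by omega)]
  · rintro (_ | j) hj
    exacts [hG, hGc j (by omega)]
termination_by (Finset.univ.filter fun i => α i = 0).card
decreasing_by exact card_filter_eq_zero_lt_of_sqLe hαβ hβα

end FractalCube

theorem interF_empty_iff_general {k n : ℕ} (hn : 2 ≤ n)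
    (D1 D2 K1 K2 : Set (Pt k)) (hD1 : IsDigitSet n D1) (hD2 : IsDigitSet n D2)
    (hK1 : IsFractalCube n D1 K1) (hK2 : IsFractalCube n D2 K2)
    (α : Pt k) (hα : IsAk α) :
    interF K1 K2 α = ∅ ↔
      ∀ (p : ℕ) (c : ℕ → Pt k), c 0 = α → (∀ j ≤ p, IsAk (c j)) →
        (∀ j < p, SqLe (c j) (c (j + 1))) →
        (∏ j ∈ Finset.range p, (Gab n D1 D2 (c j) (c (j + 1))).ncard) *
          (Gab n D1 D2 (c p) (c p)).ncard = 0 := by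
  constructor
  · intro hF p c hc0 _ _
    by_contra hprod
    obtain ⟨hG, hGa⟩ := (prod_ncard_Gab_ne_zero_iff hD1).1 hprod
    exact (hc0 ▸ interF_nonempty_of_chain hn hK1 hK2 hG hGa).ne_empty hF
  · intro H
    by_contra hF
    obtain ⟨p, c, hc0, hAk, hle, hG, hGa⟩ :=
      exists_chain_of_interF_nonempty hn hD1 hD2 hK1 hK2 hα (nonempty_iff_ne_empty.2 hF)
    exact (prod_ncard_Gab_ne_zero_iff hD1).2 ⟨hG, hGa⟩ (H p c hc0 hAk hle)

/-- `F_α = ∅` iff for every chain `α = α₀ ⊑ α₁ ⊑ … ⊑ α_p` in `A_k`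
the product `#G_{α₀α₁} ⋯ #G_{α_{p−1}α_p} · #G_{α_p α_p}` is zero. -/
theorem interF_empty_iff {k n : ℕ} (hk : 1 ≤ k) (hn : 2 ≤ n)
    (D1 D2 K1 K2 : Set (Pt k)) (hD1 : IsDigitSet n D1) (hD2 : IsDigitSet n D2)
    (hK1 : IsFractalCube n D1 K1) (hK2 : IsFractalCube n D2 K2)
    (α : Pt k) (hα : IsAk α) :
    interF K1 K2 α = ∅ ↔
      ∀ (p : ℕ) (c : ℕ → Pt k), c 0 = α → (∀ j ≤ p, IsAk (c j)) →
        (∀ j < p, SqLe (c j) (c (j + 1))) →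
        (∏ j ∈ Finset.range p, (Gab n D1 D2 (c j) (c (j + 1))).ncard) *
          (Gab n D1 D2 (c p) (c p)).ncard = 0 :=
  interF_empty_iff_general hn D1 D2 K1 K2 hD1 hD2 hK1 hK2 α hα
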